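/- arXiv:1704.00127 — 2 statements merged into one kernel-verified Lean document; each statement's English description precedes it below -/
import Mathlib

section
/- Let φ : X → Y be a measurable mapping between σ-finite measure spaces, 1 < p, r < ∞ and 1 ≤ s ≤ q ≤ ∞, and suppose f ∘ φ ∈ L_{p,q}(X) for all f ∈ L_{r,s}(Y). If K < ∞ is a constant such that ‖f ∘ φ‖_{p,q} ≤ K‖f‖_{r,s} for every f ∈ L_{r,s}(Y), then (μ(φ⁻¹(B)))^{1/p} ≤ K (ν(B))^{1/r} for every measurable set B ∈ 𝓑. -/
open MeasureTheory Set ENNReal NNReal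

/-- Distribution function `μ{x : |f(x)| > λ}` of a complex-valued function. -/
noncomputable def distribFn {X : Type*} [MeasurableSpace X] (μ : Measure X)
    (f : X → ℂ) (lam : ℝ) : ℝ≥0∞ :=
  μ {x | lam < ‖f x‖}

/-- The Lorentz `(p,q)`-norm, `1 < p < ∞`, `1 ≤ q ≤ ∞`, computed via the
distribution function. -/
noncomputable def lorentzNorm {X : Type*} [MeasurableSpace X] (μ : Measure X)
    (p : ℝ) (q : ℝ≥0∞) (f : X → ℂ) : ℝ≥0∞ :=
  if q = ∞ then ⨆ lam ∈ Set.Ioi (0 : ℝ), ENNReal.ofReal lam * (distribFn μ f lam) ^ (1 / p)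
  else (q * ∫⁻ lam in Set.Ioi (0 : ℝ),
      (ENNReal.ofReal lam * (distribFn μ f lam) ^ (1 / p)) ^ q.toReal /
        ENNReal.ofReal lam) ^ (1 / q.toReal)

/-- Membership in the Lorentz space `L_{p,q}`. -/
def MemLorentz {X : Type*} [MeasurableSpace X] (μ : Measure X)
    (p : ℝ) (q : ℝ≥0∞) (f : X → ℂ) : Prop :=
  Measurable f ∧ lorentzNorm μ p q f < ∞

/-!
The indicator of a set `A` has distribution function `μ A · 1_{(0,1)}`, so its Lorentz
`(p, q)`-norm is `μ A ^ (1 / p)` whatever `q` is. Composing `1_B` with `φ` gives `1_{φ⁻¹ B}`,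
so the assumed bound applied to `1_B` is the claim for every `B` of finite measure; a general
`B` is exhausted by the sets `B ∩ spanningSets ν n`, and continuity from below finishes.
-/

theorem lintegral_Ioo_zero_one_ofReal_rpow_sub_one {a : ℝ} (ha : 0 < a) :
    ∫⁻ t in Ioo (0 : ℝ) 1, ENNReal.ofReal (t ^ (a - 1)) = ENNReal.ofReal (1 / a) := by
  have hint : IntegrableOn (fun t : ℝ => t ^ (a - 1)) (Ioc 0 1) := by
    rw [← intervalIntegrable_iff_integrableOn_Ioc_of_le zero_le_one]
    exact intervalIntegral.intervalIntegrable_rpow' (by linarith)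
  rw [← ofReal_integral_eq_lintegral_ofReal (hint.mono_set Ioo_subset_Ioc_self)
    ((ae_restrict_mem measurableSet_Ioo).mono fun t ht => Real.rpow_nonneg ht.1.le _),
    ← integral_Ioc_eq_integral_Ioo, ← intervalIntegral.integral_of_le zero_le_one,
    integral_rpow (Or.inl (by linarith)), sub_add_cancel, Real.one_rpow,
    Real.zero_rpow ha.ne']
  ring_nf

section Lorentz

variable {X : Type*} [MeasurableSpace X] (μ : Measure X) (A : Set X)

theorem distribFn_indicator_one {lam : ℝ} (hlam : 0 < lam) :
    distribFn μ (A.indicator 1) lam = if lam < 1 then μ A else 0 := by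
  unfold distribFn
  split_ifs with h1
  · congr 1
    ext x
    by_cases hx : x ∈ A <;> simp [hx, h1, hlam.le]
  · convert measure_empty (μ := μ)
    ext x
    by_cases hx : x ∈ A <;> simp [hx, hlam.le, not_lt.1 h1]

variable {μ A}

theorem lorentzNorm_top_indicator_one {p : ℝ} (hp : 0 < p) :
    lorentzNorm μ p ∞ (A.indicator 1) = μ A ^ (1 / p) := by
  rw [lorentzNorm, if_pos rfl]
  apply le_antisymm
  · refine iSup₂_le fun lam hlam => ?_
    rw [distribFn_indicator_one μ A hlam]
    split_ifs with h1
    · exact mul_le_of_le_one_left' (ofReal_le_one.2 h1.le)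
    · simp [ENNReal.zero_rpow_of_pos (inv_pos.2 hp)]
  · refine ENNReal.le_of_forall_lt_one_mul_le fun a ha => ?_
    rcases eq_or_ne a 0 with rfl | ha0
    · simp
    have hlam : a.toReal ∈ Ioo (0 : ℝ) 1 :=
      ⟨toReal_pos ha0 ha.ne_top, toReal_lt_of_lt_ofReal (by simpa using ha)⟩
    refine le_iSup₂_of_le a.toReal hlam.1 ?_
    rw [distribFn_indicator_one μ A hlam.1, if_pos hlam.2, ofReal_toReal ha.ne_top]

theorem lorentzNorm_indicator_one_of_ne_top {p : ℝ} (hp : 0 < p) {q : ℝ≥0∞} (hq0 : q ≠ 0)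
    (hq : q ≠ ∞) : lorentzNorm μ p q (A.indicator 1) = μ A ^ (1 / p) := by
  rw [lorentzNorm, if_neg hq]
  set t := q.toReal
  set c := μ A ^ (1 / p)
  have ht : 0 < t := toReal_pos hq0 hq
  have hintegrand : EqOn
      (fun lam => (ENNReal.ofReal lam * distribFn μ (A.indicator 1) lam ^ (1 / p)) ^ t /
        ENNReal.ofReal lam)
      ((Ioo 0 1).indicator fun lam => ENNReal.ofReal (lam ^ (t - 1)) * c ^ t) (Ioi 0) := by
    intro lam (hlam : 0 < lam)
    simp only [distribFn_indicator_one μ A hlam]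
    by_cases h1 : lam < 1
    · have hne : ENNReal.ofReal lam ≠ 0 := by simpa using hlam
      rw [if_pos h1, indicator_of_mem (show lam ∈ Ioo 0 1 from ⟨hlam, h1⟩), ← ofReal_rpow_of_pos hlam,
        ENNReal.mul_rpow_of_nonneg _ _ ht.le, ENNReal.rpow_sub _ _ hne ofReal_ne_top,
        ENNReal.rpow_one, ENNReal.div_eq_inv_mul, ENNReal.div_eq_inv_mul, mul_assoc]
    · rw [if_neg h1, indicator_of_notMem fun h => h1 h.2,
        ENNReal.zero_rpow_of_pos (one_div_pos.2 hp), mul_zero, ENNReal.zero_rpow_of_pos ht,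
        ENNReal.zero_div]
  rw [setLIntegral_congr_fun measurableSet_Ioi hintegrand,
    lintegral_indicator measurableSet_Ioo, Measure.restrict_restrict measurableSet_Ioo,
    inter_eq_self_of_subset_left Ioo_subset_Ioi_self, lintegral_mul_const _ (by fun_prop),
    lintegral_Ioo_zero_one_ofReal_rpow_sub_one ht, ← mul_assoc, ← ofReal_toReal hq,
    ← ENNReal.ofReal_mul ht.le, mul_one_div_cancel ht.ne', ENNReal.ofReal_one, one_mul,
    ← ENNReal.rpow_mul, mul_one_div_cancel ht.ne', ENNReal.rpow_one]

theorem lorentzNorm_indicator_one {p : ℝ} (hp : 0 < p) {q : ℝ≥0∞} (hq0 : q ≠ 0) :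
    lorentzNorm μ p q (A.indicator 1) = μ A ^ (1 / p) := by
  rcases eq_or_ne q ∞ with rfl | hq
  · exact lorentzNorm_top_indicator_one hp
  · exact lorentzNorm_indicator_one_of_ne_top hp hq0 hq

theorem memLorentz_indicator_one {p : ℝ} (hp : 0 < p) {q : ℝ≥0∞} (hq0 : q ≠ 0)
    (hA : MeasurableSet A) (hμA : μ A ≠ ∞) : MemLorentz μ p q (A.indicator 1) :=
  ⟨measurable_one.indicator hA, by
    rw [lorentzNorm_indicator_one hp hq0]
    exact rpow_lt_top_of_nonneg (one_div_pos.2 hp).le hμA⟩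

end Lorentz

theorem rpow_measure_preimage_le_of_forall_measure_lt_top {X Y : Type*} [MeasurableSpace X]
    [MeasurableSpace Y] {μ : Measure X} {ν : Measure Y} [SigmaFinite ν] {φ : X → Y}
    {a b : ℝ} (ha : 0 < a) (hb : 0 ≤ b) {C : ℝ≥0∞}
    (h : ∀ B, MeasurableSet B → ν B < ∞ → μ (φ ⁻¹' B) ^ a ≤ C * ν B ^ b)
    {B : Set Y} (hB : MeasurableSet B) : μ (φ ⁻¹' B) ^ a ≤ C * ν B ^ b := by
  have hmono : Monotone fun n => φ ⁻¹' (B ∩ spanningSets ν n) := fun m n hmn =>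
    preimage_mono (inter_subset_inter_right _ (monotone_spanningSets ν hmn))
  have hunion : φ ⁻¹' B = ⋃ n, φ ⁻¹' (B ∩ spanningSets ν n) := by
    rw [← preimage_iUnion, ← inter_iUnion, iUnion_spanningSets, inter_univ]
  calc μ (φ ⁻¹' B) ^ a = ⨆ n, μ (φ ⁻¹' (B ∩ spanningSets ν n)) ^ a := by
        rw [hunion, hmono.measure_iUnion]
        exact (ENNReal.orderIsoRpow a ha).map_iSup _
    _ ≤ C * ν B ^ b := iSup_le fun n =>
        (h _ (hB.inter (measurableSet_spanningSets ν n))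
          ((measure_mono inter_subset_right).trans_lt (measure_spanningSets_lt_top ν n))).trans
          (by gcongr; exact inter_subset_left)

theorem measure_preimage_le_of_compositionBound_general
    {X Y : Type*} [MeasurableSpace X] [MeasurableSpace Y]
    (μ : Measure X) (ν : Measure Y) [SigmaFinite ν]
    (φ : X → Y)
    (p r : ℝ) (hp : 1 < p) (hr : 1 < r)
    (s q : ℝ≥0∞) (hs : 1 ≤ s) (hsq : s ≤ q)
    (K : ℝ≥0)
    (hK : ∀ f : Y → ℂ, MemLorentz ν r s f →
      lorentzNorm μ p q (f ∘ φ) ≤ (K : ℝ≥0∞) * lorentzNorm ν r s f) :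
    ∀ B : Set Y, MeasurableSet B →
      (μ (φ ⁻¹' B)) ^ (1 / p) ≤ (K : ℝ≥0∞) * (ν B) ^ (1 / r) := by
  have hp0 : 0 < p := zero_lt_one.trans hp
  have hr0 : 0 < r := zero_lt_one.trans hr
  have hs0 : s ≠ 0 := (zero_lt_one.trans_le hs).ne'
  have hq0 : q ≠ 0 := (zero_lt_one.trans_le (hs.trans hsq)).ne'
  intro B hB
  refine rpow_measure_preimage_le_of_forall_measure_lt_top (one_div_pos.2 hp0)
    (one_div_pos.2 hr0).le (fun B' hB' hνB' => ?_) hB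
  have hpullback : B'.indicator (1 : Y → ℂ) ∘ φ = (φ ⁻¹' B').indicator 1 :=
    funext fun x => (indicator_comp_right φ).symm
  simpa only [hpullback, lorentzNorm_indicator_one hp0 hq0, lorentzNorm_indicator_one hr0 hs0]
    using hK _ (memLorentz_indicator_one hr0 hs0 hB' hνB'.ne)

/-- If `f ∘ φ ∈ L_{p,q}(X)` for all `f ∈ L_{r,s}(Y)` and
`‖f ∘ φ‖_{p,q} ≤ K ‖f‖_{r,s}` for every `f ∈ L_{r,s}(Y)`, then
`(μ(φ⁻¹(B)))^{1/p} ≤ K (ν B)^{1/r}` for every measurable `B`. -/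
theorem measure_preimage_le_of_compositionBound
    {X Y : Type*} [MeasurableSpace X] [MeasurableSpace Y]
    (μ : Measure X) (ν : Measure Y) [SigmaFinite μ] [SigmaFinite ν]
    (φ : X → Y) (hφ : Measurable φ)
    (p r : ℝ) (hp : 1 < p) (hr : 1 < r)
    (s q : ℝ≥0∞) (hs : 1 ≤ s) (hsq : s ≤ q)
    (hcomp : ∀ f : Y → ℂ, MemLorentz ν r s f → MemLorentz μ p q (f ∘ φ))
    (K : ℝ≥0)
    (hK : ∀ f : Y → ℂ, MemLorentz ν r s f →
      lorentzNorm μ p q (f ∘ φ) ≤ (K : ℝ≥0∞) * lorentzNorm ν r s f) :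
    ∀ B : Set Y, MeasurableSet B →
      (μ (φ ⁻¹' B)) ^ (1 / p) ≤ (K : ℝ≥0∞) * (ν B) ^ (1 / r) :=
  measure_preimage_le_of_compositionBound_general μ ν φ p r hp hr s q hs hsq K hK
end

section
/- Let φ : X → Y be a measurable mapping between σ-finite measure spaces, 1 < p, r < ∞, 1 ≤ s ≤ q < ∞, and let C_φ : L_{r,s}(Y, 𝓑, ν) → L_{p,q}(X, 𝒜, μ) be a bounded composition operator. Then the image C_φ(L_{r,s}(Y, 𝓑, ν)) is dense in L_{p,q}(X, φ⁻¹(𝓑), μ), the Lorentz space of functions on X measurable with respect to the σ-algebra φ⁻¹(𝓑) = {φ⁻¹(B) : B ∈ 𝓑}. -/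
open MeasureTheory Set ENNReal NNReal

/-!
By Doob–Dynkin, `h = g ∘ φ` with `g` measurable on `Y`. Cutting `g` down to the sets `S n` of a
σ-finite exhaustion of `Y` on which `‖g‖ ≤ n` gives bounded, finitely supported functions
`f n ∈ L_{r,s}`, and `h - f n ∘ φ` is `h` cut off outside `φ⁻¹(S n)`. Its distribution function
is dominated by that of `h`, which is finite at every positive level because `‖h‖_{p,q} < ∞`,
so it decreases to zero; dominated convergence in the integral defining the Lorentz norm gives
`‖h - f n ∘ φ‖_{p,q} → 0`.
-/

open Filter Topology

section Lorentz

variable {X : Type*} [MeasurableSpace X] {μ : Measure X} {p : ℝ} {q : ℝ≥0∞}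

theorem distribFn_mono {f g : X → ℂ} (hfg : ∀ x, ‖f x‖ ≤ ‖g x‖) (t : ℝ) :
    distribFn μ f t ≤ distribFn μ g t :=
  measure_mono fun _ hx => lt_of_lt_of_le hx (hfg _)

theorem distribFn_antitone (f : X → ℂ) : Antitone (distribFn μ f) :=
  fun _ _ hst => measure_mono fun _ hx => lt_of_le_of_lt hst hx

theorem distribFn_indicator_compl (s : Set X) (f : X → ℂ) {t : ℝ} (ht : 0 ≤ t) :
    distribFn μ (sᶜ.indicator f) t = μ (sᶜ ∩ {x | t < ‖f x‖}) := by
  rw [distribFn]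
  congr 1
  ext x
  by_cases hx : x ∈ s <;> simp [hx, ht]

noncomputable def lorentzIntegrand (μ : Measure X) (p : ℝ) (q : ℝ≥0∞) (f : X → ℂ)
    (t : ℝ) : ℝ≥0∞ :=
  (ENNReal.ofReal t * distribFn μ f t ^ (1 / p)) ^ q.toReal / ENNReal.ofReal t

theorem lorentzNorm_of_ne_top (hq : q ≠ ∞) (f : X → ℂ) :
    lorentzNorm μ p q f =
      (q * ∫⁻ t in Ioi 0, lorentzIntegrand μ p q f t) ^ (1 / q.toReal) := by
  rw [lorentzNorm, if_neg hq]
  rfl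

theorem lorentzNorm_lt_top_iff (hq0 : q ≠ 0) (hq : q ≠ ∞) (f : X → ℂ) :
    lorentzNorm μ p q f < ∞ ↔ ∫⁻ t in Ioi 0, lorentzIntegrand μ p q f t < ∞ := by
  rw [lorentzNorm_of_ne_top hq, rpow_lt_top_iff_of_pos (by simp [ENNReal.toReal_pos hq0 hq])]
  simp [lt_top_iff_ne_top, ENNReal.mul_eq_top, hq0, hq]

theorem lorentzIntegrand_eq {t : ℝ} (ht : 0 < t) (f : X → ℂ) :
    lorentzIntegrand μ p q f t =
      ENNReal.ofReal t ^ (q.toReal - 1) * distribFn μ f t ^ (q.toReal / p) := by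
  have ht0 : ENNReal.ofReal t ≠ 0 := (ENNReal.ofReal_pos.2 ht).ne'
  rw [lorentzIntegrand, ENNReal.mul_rpow_of_nonneg _ _ ENNReal.toReal_nonneg, ← ENNReal.rpow_mul,
    ENNReal.rpow_sub _ _ ht0 ENNReal.ofReal_ne_top, ENNReal.rpow_one, one_div_mul_eq_div,
    ENNReal.div_eq_inv_mul, ENNReal.div_eq_inv_mul, ← mul_assoc]

theorem lorentzIntegrand_mono (hp : 0 ≤ p) {f g : X → ℂ} {t : ℝ}
    (hfg : distribFn μ f t ≤ distribFn μ g t) :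
    lorentzIntegrand μ p q f t ≤ lorentzIntegrand μ p q g t := by
  unfold lorentzIntegrand
  gcongr

theorem measurable_lorentzIntegrand (f : X → ℂ) : Measurable (lorentzIntegrand μ p q f) := by
  have := (distribFn_antitone (μ := μ) f).measurable
  unfold lorentzIntegrand
  fun_prop

theorem distribFn_lt_top_of_lorentzNorm_lt_top (hp : 0 < p) (hq0 : q ≠ 0) (hq : q ≠ ∞)
    {f : X → ℂ} (hf : lorentzNorm μ p q f < ∞) {t : ℝ} (ht : 0 < t) :
    distribFn μ f t < ∞ := by
  rw [lorentzNorm_lt_top_iff hq0 hq] at hf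
  by_contra hinf
  have htop : ∀ τ ∈ Ioc 0 t, lorentzIntegrand μ p q f τ = ∞ := by
    intro τ hτ
    have hd : distribFn μ f τ = ∞ :=
      top_unique ((not_lt_top.1 hinf).ge.trans (distribFn_antitone f hτ.2))
    rw [lorentzIntegrand_eq hτ.1, hd,
      ENNReal.top_rpow_of_pos (div_pos (ENNReal.toReal_pos hq0 hq) hp), ENNReal.mul_top]
    exact (ENNReal.rpow_pos (ENNReal.ofReal_pos.2 hτ.1) ENNReal.ofReal_ne_top).ne'
  refine hf.ne (top_unique ?_)
  calc ∞ = ∫⁻ _ in Ioc 0 t, ∞ := by simp [ht]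
    _ = ∫⁻ τ in Ioc 0 t, lorentzIntegrand μ p q f τ :=
      (setLIntegral_congr_fun measurableSet_Ioc htop).symm
    _ ≤ ∫⁻ τ in Ioi 0, lorentzIntegrand μ p q f τ := lintegral_mono_set Ioc_subset_Ioi_self

theorem tendsto_lorentzIntegrand (hp : 0 < p) (hq0 : q ≠ 0) (hq : q ≠ ∞) {u : ℕ → X → ℂ}
    {t : ℝ} (ht : 0 < t) (hu : Tendsto (fun n => distribFn μ (u n) t) atTop (𝓝 0)) :
    Tendsto (fun n => lorentzIntegrand μ p q (u n) t) atTop (𝓝 0) := by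
  simp_rw [lorentzIntegrand_eq ht]
  have h := ENNReal.Tendsto.const_mul
    ((ENNReal.continuous_rpow_const (y := q.toReal / p)).tendsto 0 |>.comp hu)
    (Or.inr (ENNReal.rpow_ne_top_of_ne_zero (y := q.toReal - 1) (ENNReal.ofReal_pos.2 ht).ne'
      ENNReal.ofReal_ne_top))
  simpa [ENNReal.zero_rpow_of_pos (div_pos (ENNReal.toReal_pos hq0 hq) hp)] using h

theorem tendsto_lorentzNorm_of_tendsto_distribFn (hp : 0 < p) (hq0 : q ≠ 0) (hq : q ≠ ∞)
    {u : ℕ → X → ℂ} {f : X → ℂ} (hf : lorentzNorm μ p q f < ∞)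
    (hle : ∀ n t, distribFn μ (u n) t ≤ distribFn μ f t)
    (hu : ∀ t, 0 < t → Tendsto (fun n => distribFn μ (u n) t) atTop (𝓝 0)) :
    Tendsto (fun n => lorentzNorm μ p q (u n)) atTop (𝓝 0) := by
  have hint :
      Tendsto (fun n => ∫⁻ t in Ioi 0, lorentzIntegrand μ p q (u n) t) atTop (𝓝 0) := by
    simpa using tendsto_lintegral_of_dominated_convergence (lorentzIntegrand μ p q f)
      (fun n => measurable_lorentzIntegrand (u n))
      (fun n => ae_of_all _ fun t => lorentzIntegrand_mono hp.le (hle n t))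
      ((lorentzNorm_lt_top_iff hq0 hq f).1 hf).ne
      ((ae_restrict_iff' measurableSet_Ioi).2
        (ae_of_all _ fun t ht => tendsto_lorentzIntegrand hp hq0 hq ht (hu t ht)))
  have hpow := (ENNReal.continuous_rpow_const (y := 1 / q.toReal)).tendsto 0
  rw [ENNReal.zero_rpow_of_pos (one_div_pos.2 (ENNReal.toReal_pos hq0 hq))] at hpow
  have hmul := ENNReal.Tendsto.const_mul hint (Or.inr hq)
  rw [mul_zero] at hmul
  simp_rw [lorentzNorm_of_ne_top hq]
  exact hpow.comp hmul

theorem tendsto_distribFn_indicator_compl {A : ℕ → Set X} (hA : Monotone A)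
    (hAm : ∀ n, MeasurableSet (A n)) (hcover : ⋃ n, A n = univ) {f : X → ℂ} (hf : Measurable f)
    {t : ℝ} (ht : 0 ≤ t) (hft : distribFn μ f t ≠ ∞) :
    Tendsto (fun n => distribFn μ ((A n)ᶜ.indicator f) t) atTop (𝓝 0) := by
  simp_rw [distribFn_indicator_compl _ _ ht]
  have hempty : ⋂ n, (A n)ᶜ ∩ {x | t < ‖f x‖} = ∅ := by
    rw [← iInter_inter, ← compl_iUnion, hcover, compl_univ, empty_inter]
  have h := tendsto_measure_iInter_atTop
    (fun n =>
      ((hAm n).compl.inter (measurableSet_lt measurable_const hf.norm)).nullMeasurableSet)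
    (fun m n hmn => inter_subset_inter_left _ (compl_subset_compl.2 (hA hmn)))
    ⟨0, ne_top_of_le_ne_top hft (measure_mono inter_subset_right)⟩
  rwa [hempty, measure_empty] at h

theorem tendsto_lorentzNorm_indicator_compl (hp : 0 < p) (hq0 : q ≠ 0) (hq : q ≠ ∞)
    {A : ℕ → Set X} (hA : Monotone A) (hAm : ∀ n, MeasurableSet (A n))
    (hcover : ⋃ n, A n = univ) {f : X → ℂ} (hf : Measurable f)
    (hfnorm : lorentzNorm μ p q f < ∞) :
    Tendsto (fun n => lorentzNorm μ p q ((A n)ᶜ.indicator f)) atTop (𝓝 0) :=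
  tendsto_lorentzNorm_of_tendsto_distribFn hp hq0 hq hfnorm
    (fun _ => distribFn_mono fun x => norm_indicator_le_norm_self f x)
    fun _ ht => tendsto_distribFn_indicator_compl hA hAm hcover hf ht.le
      (distribFn_lt_top_of_lorentzNorm_lt_top hp hq0 hq hfnorm ht).ne

theorem distribFn_indicator_le_measure (S : Set X) (f : X → ℂ) {t : ℝ} (ht : 0 ≤ t) :
    distribFn μ (S.indicator f) t ≤ μ S :=
  measure_mono fun x hx => by
    by_contra hxS
    simp only [mem_ofPred_eq, indicator_of_notMem hxS, norm_zero] at hx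
    exact not_lt.2 ht hx

theorem distribFn_indicator_eq_zero {S : Set X} {f : X → ℂ} {C t : ℝ}
    (hC : ∀ x ∈ S, ‖f x‖ ≤ C) (hCt : C < t) (ht : 0 ≤ t) :
    distribFn μ (S.indicator f) t = 0 := by
  rw [distribFn, ← measure_empty (μ := μ)]
  congr 1
  refine eq_empty_of_forall_notMem fun x hx => ?_
  by_cases hxS : x ∈ S
  · simp only [mem_ofPred_eq, indicator_of_mem hxS] at hx
    linarith [hC x hxS]
  · simp only [mem_ofPred_eq, indicator_of_notMem hxS, norm_zero] at hx
    linarith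

theorem lorentzNorm_indicator_lt_top (hp : 0 < p) (hq : 1 ≤ q) (hq' : q ≠ ∞) {S : Set X}
    (hS : μ S ≠ ∞) {f : X → ℂ} {C : ℝ} (hC : ∀ x ∈ S, ‖f x‖ ≤ C) :
    lorentzNorm μ p q (S.indicator f) < ∞ := by
  have hq1 : 1 ≤ q.toReal := by simpa using ENNReal.toReal_mono hq' hq
  set M := ENNReal.ofReal C ^ (q.toReal - 1) * μ S ^ (q.toReal / p)
  have hbound : ∀ t ∈ Ioi 0,
      lorentzIntegrand μ p q (S.indicator f) t ≤ (Ioc 0 C).indicator (fun _ => M) t := by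
    intro t ht
    rw [lorentzIntegrand_eq ht]
    rcases le_or_gt t C with htC | htC
    · rw [indicator_of_mem (show t ∈ Ioc 0 C from ⟨ht, htC⟩)]
      exact mul_le_mul' (ENNReal.rpow_le_rpow (ENNReal.ofReal_le_ofReal htC) (by linarith))
        (ENNReal.rpow_le_rpow (distribFn_indicator_le_measure S f (le_of_lt ht))
          (div_nonneg (by linarith) hp.le))
    · rw [distribFn_indicator_eq_zero hC htC (le_of_lt ht),
        ENNReal.zero_rpow_of_pos (div_pos (by linarith) hp), mul_zero]
      exact bot_le
  rw [lorentzNorm_lt_top_iff (zero_lt_one.trans_le hq).ne' hq']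
  calc ∫⁻ t in Ioi 0, lorentzIntegrand μ p q (S.indicator f) t
      ≤ ∫⁻ t in Ioi 0, (Ioc 0 C).indicator (fun _ => M) t :=
        setLIntegral_mono' measurableSet_Ioi hbound
    _ ≤ ∫⁻ t, (Ioc 0 C).indicator (fun _ => M) t := setLIntegral_le_lintegral _ _
    _ = M * volume (Ioc 0 C) := lintegral_indicator_const measurableSet_Ioc M
    _ < ∞ := ENNReal.mul_lt_top
      (ENNReal.mul_lt_top (ENNReal.rpow_lt_top_of_nonneg (by linarith) ENNReal.ofReal_ne_top)
        (ENNReal.rpow_lt_top_of_nonneg (div_nonneg (by linarith) hp.le) hS)) measure_Ioc_lt_top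

end Lorentz

theorem exists_monotone_spanning_norm_le {Y E : Type*} [MeasurableSpace Y] (ν : Measure Y)
    [SigmaFinite ν] [NormedAddCommGroup E] [MeasurableSpace E] [OpensMeasurableSpace E]
    {g : Y → E} (hg : Measurable g) :
    ∃ S : ℕ → Set Y, Monotone S ∧ (∀ n, MeasurableSet (S n)) ∧ ⋃ n, S n = univ ∧
      ∀ n, ν (S n) ≠ ∞ ∧ ∀ y ∈ S n, ‖g y‖ ≤ n := by
  refine ⟨fun n => spanningSets ν n ∩ {y | ‖g y‖ ≤ n},
    fun m n hmn => inter_subset_inter (monotone_spanningSets ν hmn)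
      fun y (hy : ‖g y‖ ≤ m) => hy.trans (Nat.cast_le.2 hmn),
    fun n => (measurableSet_spanningSets ν n).inter (measurableSet_le hg.norm measurable_const),
    eq_univ_of_forall fun y => ?_,
    fun n => ⟨ne_top_of_le_ne_top (measure_spanningSets_lt_top ν n).ne
      (measure_mono inter_subset_left), fun y hy => hy.2⟩⟩
  obtain ⟨a, ha⟩ := mem_iUnion.1 ((iUnion_spanningSets ν).symm ▸ mem_univ y)
  obtain ⟨b, hb⟩ := exists_nat_ge ‖g y‖
  exact mem_iUnion.2 ⟨max a b, monotone_spanningSets ν (le_max_left a b) ha,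
    hb.trans (Nat.cast_le.2 (le_max_right a b))⟩

theorem denseImage_compositionOperator_general
    {X Y : Type*} [mX : MeasurableSpace X] [mY : MeasurableSpace Y]
    (μ : Measure X) (ν : Measure Y) [SigmaFinite ν]
    (φ : X → Y) (hφ : Measurable φ)
    (p r : ℝ) (hp : 1 < p) (hr : 1 < r)
    (s q : ℝ≥0∞) (hs : 1 ≤ s) (hsq : s ≤ q) (hq : q ≠ ∞) :
    ∀ h : X → ℂ, Measurable[mY.comap φ] h → lorentzNorm μ p q h < ∞ →
      ∀ ε : ℝ≥0∞, 0 < ε → ∃ f : Y → ℂ, MemLorentz ν r s f ∧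
        lorentzNorm μ p q (fun x => h x - f (φ x)) < ε := by
  intro h hh hnorm ε hε
  obtain ⟨g, hg, rfl⟩ := hh.exists_eq_measurable_comp
  obtain ⟨S, hSmono, hSmeas, hScover, hSfin⟩ := exists_monotone_spanning_norm_le ν hg
  have htail := tendsto_lorentzNorm_indicator_compl (zero_lt_one.trans hp)
    (zero_lt_one.trans_le (hs.trans hsq)).ne' hq (fun _ _ hmn => preimage_mono (hSmono hmn))
    (fun n => hφ (hSmeas n)) (by rw [← preimage_iUnion, hScover, preimage_univ])
    (hg.comp hφ) hnorm
  obtain ⟨n, hn⟩ := (htail.eventually_lt_const hε).exists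
  have hcut :
      (fun x => (g ∘ φ) x - (S n).indicator g (φ x)) = (φ ⁻¹' S n)ᶜ.indicator (g ∘ φ) := by
    ext x
    by_cases hx : φ x ∈ S n <;> simp [hx]
  refine ⟨(S n).indicator g, ⟨hg.indicator (hSmeas n), lorentzNorm_indicator_lt_top
    (zero_lt_one.trans hr) hs (ne_top_of_le_ne_top hq hsq) (hSfin n).1 (hSfin n).2⟩, ?_⟩
  rwa [hcut]

/-- The image of a bounded composition operator
`C_φ : L_{r,s}(Y, 𝓑, ν) → L_{p,q}(X, 𝒜, μ)` is dense in `L_{p,q}(X, φ⁻¹(𝓑), μ)`,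
the Lorentz space of functions measurable w.r.t. the σ-algebra `φ⁻¹(𝓑)`. -/
theorem denseImage_compositionOperator
    {X Y : Type*} [mX : MeasurableSpace X] [mY : MeasurableSpace Y]
    (μ : Measure X) (ν : Measure Y) [SigmaFinite μ] [SigmaFinite ν]
    (φ : X → Y) (hφ : Measurable φ)
    (p r : ℝ) (hp : 1 < p) (hr : 1 < r)
    (s q : ℝ≥0∞) (hs : 1 ≤ s) (hsq : s ≤ q) (hq : q ≠ ∞)
    (K : ℝ≥0)
    (hcomp : ∀ f : Y → ℂ, MemLorentz ν r s f → MemLorentz μ p q (f ∘ φ))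
    (hK : ∀ f : Y → ℂ, MemLorentz ν r s f →
      lorentzNorm μ p q (f ∘ φ) ≤ (K : ℝ≥0∞) * lorentzNorm ν r s f) :
    ∀ h : X → ℂ, Measurable[mY.comap φ] h → lorentzNorm μ p q h < ∞ →
      ∀ ε : ℝ≥0∞, 0 < ε → ∃ f : Y → ℂ, MemLorentz ν r s f ∧
        lorentzNorm μ p q (fun x => h x - f (φ x)) < ε :=
  denseImage_compositionOperator_general (mX := mX) (mY := mY) μ ν φ hφ p r hp hr s q hs hsq hq
end
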